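/- Completeness of the metric HML: in any finite-state image-finite pLTS, the logical state metric d^L(s,t) = sup_φ |⟦φ⟧(s) − ⟦φ⟧(t)| is itself a state-based bisimulation metric; hence d_b ⊑ d^L, and combined with soundness, d_b = d^L and K(d_b) equals the logical distribution metric. -/

import Mathlib

open scoped BigOperators

/-- A (full) probability distribution over a finite set `S`. -/
def IsDist {S : Type} [Fintype S] (Δ : S → ℝ) : Prop :=
  (∀ s, 0 ≤ Δ s) ∧ ∑ s, Δ s = 1

/-- A matching (coupling) for a pair of distributions. -/
def IsMatching {S : Type} [Fintype S] (ω : S × S → ℝ) (Δ Θ : S → ℝ) : Prop :=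
  IsDist ω ∧ (∀ s, ∑ t, ω (s, t) = Δ s) ∧ (∀ t, ∑ s, ω (s, t) = Θ t)

/-- The Kantorovich lifting of `d` (primal formulation, via matchings). -/
noncomputable def Kan {S : Type} [Fintype S] (d : S → S → ℝ) (Δ Θ : S → ℝ) : ℝ :=
  sInf {r | ∃ ω : S × S → ℝ, IsMatching ω Δ Θ ∧ r = ∑ p : S × S, d p.1 p.2 * ω p}

/-- The Kantorovich lifting of `d` (dual linear-programming formulation). -/
noncomputable def KanD {S : Type} [Fintype S] (d : S → S → ℝ) (Δ Θ : S → ℝ) : ℝ :=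
  sSup {r | ∃ x : S → ℝ, (∀ s, 0 ≤ x s ∧ x s ≤ 1) ∧ (∀ s t, x s - x t ≤ d s t) ∧
    r = ∑ s, (Δ s - Θ s) * x s}

/-- `d` is a pseudometric. -/
def IsPseudometric {X : Type*} (d : X → X → ℝ) : Prop :=
  (∀ x, d x x = 0) ∧ (∀ x y, d x y = d y x) ∧ ∀ x y z, d x z ≤ d x y + d y z

/-- `d` is `1`-bounded (takes values in `[0,1]`). -/
def Bounded1 {X : Type*} (d : X → X → ℝ) : Prop := ∀ x y, 0 ≤ d x y ∧ d x y ≤ 1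

open Classical in
/-- Infimum of a set of reals with the convention `inf ∅ = 1`. -/
noncomputable def inf1 (s : Set ℝ) : ℝ := if s.Nonempty then sInf s else 1

open Classical in
/-- Supremum of a set of reals with the convention `sup ∅ = 0`. -/
noncomputable def sup0 (s : Set ℝ) : ℝ := if s.Nonempty then sSup s else 0

/-- The Hausdorff lifting of a `1`-bounded metric to subsets. -/
noncomputable def hausd {X : Type*} (d : X → X → ℝ) (P Q : Set X) : ℝ :=
  max (sup0 {r | ∃ x ∈ P, r = inf1 {r' | ∃ y ∈ Q, r' = d x y}})
      (sup0 {r | ∃ y ∈ Q, r = inf1 {r' | ∃ x ∈ P, r' = d x y}})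

/-- A probabilistic labelled transition system. -/
structure PLTS (S : Type) (A : Type) where
  trans : S → A → (S → ℝ) → Prop

/-- The set of `a`-successor distributions of state `s`. -/
def der {S A : Type} (T : PLTS S A) (s : S) (a : A) : Set (S → ℝ) := {Δ | T.trans s a Δ}

/-- Image-finiteness of a pLTS. -/
def ImageFinite {S A : Type} (T : PLTS S A) : Prop := ∀ s a, (der T s a).Finite

/-- Every transition target is a (full) distribution. -/
def WellFormed {S A : Type} [Fintype S] (T : PLTS S A) : Prop :=
  ∀ s a Δ, T.trans s a Δ → IsDist Δ

/-- `d` is a state-based bisimulation metric. -/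
def IsSBM {S A : Type} [Fintype S] (T : PLTS S A) (d : S → S → ℝ) : Prop :=
  IsPseudometric d ∧ Bounded1 d ∧
  ∀ s t (ε : ℝ), 0 ≤ ε → ε < 1 → d s t ≤ ε →
    ∀ a Δ, T.trans s a Δ → ∃ Δ', T.trans t a Δ' ∧ Kan d Δ Δ' ≤ ε

/-- The unit interval `[0,1]` as a type of probabilities. -/
abbrev UI : Type := { p : ℝ // 0 ≤ p ∧ p ≤ 1 }

mutual
  /-- State formulae of the metric HML. -/
  inductive SF (A : Type) : Type where
    | top : SF A
    | neg : SF A → SF A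
    | sub : SF A → UI → SF A
    | and : SF A → SF A → SF A
    | dia : A → DF A → SF A
  /-- Distribution formulae of the metric HML. -/
  inductive DF (A : Type) : Type where
    | sub : DF A → UI → DF A
    | and : DF A → DF A → DF A
    | box : SF A → DF A
end

mutual
  /-- Semantics of state formulae. -/
  noncomputable def semS {S A : Type} [Fintype S] (T : PLTS S A) : SF A → S → ℝ
    | SF.top, _ => 1
    | SF.neg φ, s => 1 - semS T φ s
    | SF.sub φ p, s => max (semS T φ s - p.1) 0
    | SF.and φ₁ φ₂, s => min (semS T φ₁ s) (semS T φ₂ s)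
    | SF.dia a ψ, s => sup0 {r | ∃ Δ, T.trans s a Δ ∧ r = semD T ψ Δ}
  /-- Semantics of distribution formulae. -/
  noncomputable def semD {S A : Type} [Fintype S] (T : PLTS S A) : DF A → (S → ℝ) → ℝ
    | DF.sub ψ p, Δ => max (semD T ψ Δ - p.1) 0
    | DF.and ψ₁ ψ₂, Δ => min (semD T ψ₁ Δ) (semD T ψ₂ Δ)
    | DF.box φ, Δ => ∑ s, Δ s * semS T φ s
end

/-- The logical metric on states induced by state formulae. -/
noncomputable def dLogic {S A : Type} [Fintype S] (T : PLTS S A) : S → S → ℝ :=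
  fun s t => sSup {r | ∃ φ : SF A, r = |semS T φ s - semS T φ t|}

/-- The logical metric on distributions induced by distribution formulae. -/
noncomputable def dDLogic {S A : Type} [Fintype S] (T : PLTS S A) : (S → ℝ) → (S → ℝ) → ℝ :=
  fun Δ Θ => sSup {r | ∃ ψ : DF A, r = |semD T ψ Δ - semD T ψ Θ|}

/-!
Soundness: every formula is nonexpansive for every state-based bisimulation metric `d`: at `⟨a⟩ψ`
by the transfer property of `d`, at `[φ]` because `K(d)` bounds the difference of the expectations
of a `d`-Lipschitz function. Hence `d^L ≤ d`, and the logical distribution metric is below `K(d)`.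

Completeness: if `K(d^L)(Δ, Θ) > ε`, Kantorovich duality (Hahn–Banach separation from the compact
convex set of couplings) gives a `d^L`-Lipschitz `u : S → [0,1]` whose expectations under `Δ` and
`Θ` differ by more than `ε`. As `S` is finite, `u` is uniformly approximated by a max of mins of
state formulae, each agreeing with `u` at one state, so some `[φ]` separates `Δ` from `Θ`. If
`s →a Δ` were matched within `ε` by no `a`-move of `t`, lowering these separators to a common value
at `Δ` with `⊖` and conjoining them over the finitely many `a`-moves of `t` gives `⟨a⟩ψ` telling
`s` from `t` by more than `ε ≥ d^L(s, t)`. So `d^L` is a bisimulation metric, hence the least one.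
-/

section Kantorovich

variable {S : Type} [Fintype S]

theorem IsDist.nonempty {Δ : S → ℝ} (hΔ : IsDist Δ) : Nonempty S := by
  by_contra h
  have := hΔ.2
  simp [not_nonempty_iff.mp h] at this

theorem IsDist.sum_mul_le_sum_mul {Δ f g : S → ℝ} (hΔ : IsDist Δ) (h : ∀ s, f s ≤ g s) :
    ∑ s, Δ s * f s ≤ ∑ s, Δ s * g s :=
  Finset.sum_le_sum fun s _ => mul_le_mul_of_nonneg_left (h s) (hΔ.1 s)

theorem IsDist.sum_mul_add_const {Δ : S → ℝ} (hΔ : IsDist Δ) (g : S → ℝ) (k : ℝ) :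
    ∑ s, Δ s * (g s + k) = ∑ s, Δ s * g s + k := by
  simp only [mul_add, Finset.sum_add_distrib, ← Finset.sum_mul, hΔ.2, one_mul]

theorem IsDist.sum_mul_mem_Icc {Δ g : S → ℝ} (hΔ : IsDist Δ) (hg : ∀ s, g s ∈ Set.Icc 0 1) :
    ∑ s, Δ s * g s ∈ Set.Icc 0 1 := by
  refine ⟨Finset.sum_nonneg fun s _ => mul_nonneg (hΔ.1 s) (hg s).1, ?_⟩
  calc ∑ s, Δ s * g s ≤ ∑ s, Δ s * 1 := hΔ.sum_mul_le_sum_mul fun s => (hg s).2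
    _ = 1 := by simp [hΔ.2]

theorem isMatching_mul {Δ Θ : S → ℝ} (hΔ : IsDist Δ) (hΘ : IsDist Θ) :
    IsMatching (fun p : S × S => Δ p.1 * Θ p.2) Δ Θ := by
  refine ⟨⟨fun p => mul_nonneg (hΔ.1 p.1) (hΘ.1 p.2), ?_⟩, fun s => ?_, fun t => ?_⟩
  · simp only [Fintype.sum_prod_type, ← Finset.mul_sum, hΘ.2, mul_one, hΔ.2]
  · simp only [← Finset.mul_sum, hΘ.2, mul_one]
  · simp only [← Finset.sum_mul, hΔ.2, one_mul]

theorem IsMatching.sum_mul_fst {ω : S × S → ℝ} {Δ Θ : S → ℝ} (hω : IsMatching ω Δ Θ)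
    (g : S → ℝ) : ∑ s, Δ s * g s = ∑ p, ω p * g p.1 := by
  simp only [Fintype.sum_prod_type, ← hω.2.1, Finset.sum_mul]

theorem IsMatching.sum_mul_snd {ω : S × S → ℝ} {Δ Θ : S → ℝ} (hω : IsMatching ω Δ Θ)
    (g : S → ℝ) : ∑ t, Θ t * g t = ∑ p, ω p * g p.2 := by
  rw [Fintype.sum_prod_type, Finset.sum_comm]
  simp only [← hω.2.2, Finset.sum_mul]

theorem kan_le_cost {d : S → S → ℝ} (hd : ∀ s t, 0 ≤ d s t) {ω : S × S → ℝ} {Δ Θ : S → ℝ}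
    (hω : IsMatching ω Δ Θ) : Kan d Δ Θ ≤ ∑ p : S × S, d p.1 p.2 * ω p := by
  refine csInf_le ⟨0, ?_⟩ ⟨ω, hω, rfl⟩
  rintro r ⟨ω', hω', rfl⟩
  exact Finset.sum_nonneg fun p _ => mul_nonneg (hd _ _) (hω'.1.1 p)

theorem abs_sum_mul_sub_le_kan {d : S → S → ℝ} {Δ Θ : S → ℝ} (hΔ : IsDist Δ) (hΘ : IsDist Θ)
    {g : S → ℝ} (hg : ∀ s t, |g s - g t| ≤ d s t) :
    |∑ s, Δ s * g s - ∑ t, Θ t * g t| ≤ Kan d Δ Θ := by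
  refine le_csInf ⟨_, _, isMatching_mul hΔ hΘ, rfl⟩ ?_
  rintro r ⟨ω, hω, rfl⟩
  rw [hω.sum_mul_fst, hω.sum_mul_snd, ← Finset.sum_sub_distrib]
  refine (Finset.abs_sum_le_sum_abs _ _).trans (Finset.sum_le_sum fun p _ => ?_)
  rw [← mul_sub, abs_mul, abs_of_nonneg (hω.1.1 p), mul_comm]
  exact mul_le_mul_of_nonneg_right (hg p.1 p.2) (hω.1.1 p)

/-- The couplings of `Δ` and `Θ` are the points of the standard simplex sent to `(Δ, Θ, _)`. -/
noncomputable def marginalsCost (d : S → S → ℝ) :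
    (S × S → ℝ) →ₗ[ℝ] (S → ℝ) × (S → ℝ) × ℝ where
  toFun ω := (fun s => ∑ t, ω (s, t), fun t => ∑ s, ω (s, t), ∑ p : S × S, d p.1 p.2 * ω p)
  map_add' ω ω' := by
    ext <;> simp [Finset.sum_add_distrib, mul_add]
  map_smul' c ω := by
    ext <;> simp [Finset.mul_sum, mul_left_comm]

theorem marginalsCost_single [DecidableEq S] (d : S → S → ℝ) (s t : S) :
    marginalsCost d (Pi.single (s, t) 1) = (Pi.single s 1, Pi.single t 1, d s t) := by
  ext z <;> simp [marginalsCost, Pi.single_apply, ite_and]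

theorem strongDual_apply_prod {ι : Type} [Fintype ι] [DecidableEq ι]
    (F : StrongDual ℝ ((ι → ℝ) × (ι → ℝ) × ℝ)) (r q : ι → ℝ) (m : ℝ) :
    F (r, q, m) = ∑ i, r i * F (Pi.single i 1, 0, 0) + ∑ i, q i * F (0, Pi.single i 1, 0) +
      m * F (0, 0, 1) := by
  have : (r, q, m) = ∑ i, r i • ((Pi.single i 1, 0, 0) : (ι → ℝ) × (ι → ℝ) × ℝ) +
      ∑ i, q i • ((0, Pi.single i 1, 0) : (ι → ℝ) × (ι → ℝ) × ℝ) + m • (0, 0, 1) := by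
    ext <;> simp [Prod.fst_sum, Prod.snd_sum, Pi.single_apply]
  conv_lhs => rw [this]
  simp only [map_add, map_sum, map_smul, smul_eq_mul]

theorem notMem_marginalsCost_of_lt_kan {d : S → S → ℝ} (hd : ∀ s t, 0 ≤ d s t) {Δ Θ : S → ℝ}
    {c : ℝ} (hc : c < Kan d Δ Θ) : (Δ, Θ, c) ∉ marginalsCost d '' stdSimplex ℝ (S × S) := by
  rintro ⟨ω, hω, heq⟩
  simp only [marginalsCost, LinearMap.coe_mk, AddHom.coe_mk, Prod.mk.injEq] at heq
  obtain ⟨hfst, hsnd, hcost⟩ := heq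
  have := kan_le_cost hd (ω := ω) ⟨hω, fun s => congrFun hfst s, fun t => congrFun hsnd t⟩
  linarith

/-- Kantorovich duality, by separating `(Δ, Θ, c)` from the compact convex image of the couplings
under `marginalsCost d`. -/
theorem exists_potentials_of_lt_kan {d : S → S → ℝ} (hd : ∀ s t, 0 ≤ d s t) {Δ Θ : S → ℝ}
    (hΔ : IsDist Δ) (hΘ : IsDist Θ) {c : ℝ} (hc : c < Kan d Δ Θ) :
    ∃ f g : S → ℝ, (∀ s t, f s - g t ≤ d s t) ∧ c < ∑ s, Δ s * f s - ∑ t, Θ t * g t := by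
  classical
  have hclosed : IsClosed (marginalsCost d '' stdSimplex ℝ (S × S)) :=
    ((isCompact_stdSimplex ℝ _).image (marginalsCost d).continuous_of_finiteDimensional).isClosed
  obtain ⟨F, u, hFC, huF⟩ := geometric_hahn_banach_closed_point
    ((convex_stdSimplex ℝ _).linear_image _) hclosed (notMem_marginalsCost_of_lt_kan hd hc)
  set x : S → ℝ := fun s => F (Pi.single s 1, 0, 0)
  set y : S → ℝ := fun t => F (0, Pi.single t 1, 0)
  set l := F (0, 0, 1)
  have hvertex : ∀ s t, x s + y t + d s t * l < u := by
    intro s t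
    have := hFC _ ⟨_, single_mem_stdSimplex ℝ (s, t), rfl⟩
    rw [marginalsCost_single, strongDual_apply_prod] at this
    simpa [Pi.single_apply] using this
  rw [strongDual_apply_prod] at huF
  -- the product coupling costs at least `Kan d Δ Θ > c`
  have hl : l < 0 := by
    have hprod := isMatching_mul hΔ hΘ
    have hmem := hFC _ ⟨_, hprod.1, rfl⟩
    simp only [marginalsCost, LinearMap.coe_mk, AddHom.coe_mk, hprod.2.1, hprod.2.2] at hmem
    rw [strongDual_apply_prod] at hmem
    nlinarith [kan_le_cost hd hprod]
  refine ⟨fun s => x s / -l, fun t => (u - y t) / -l, fun s t => ?_, ?_⟩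
  · rw [div_sub_div_same, div_le_iff₀ (neg_pos.2 hl)]
    linarith [hvertex s t]
  · have hsum : ∑ s, Δ s * (x s / -l) - ∑ t, Θ t * ((u - y t) / -l)
        = (∑ s, Δ s * x s + ∑ t, Θ t * y t - u) / -l := by
      simp only [mul_div_assoc', ← Finset.sum_div, mul_sub, Finset.sum_sub_distrib,
        ← Finset.sum_mul, hΘ.2, one_mul]
      ring
    rw [hsum, lt_div_iff₀ (neg_pos.2 hl)]
    linarith

/-- The witness is the envelope `w t = min_s (d s t + g s)`. -/
theorem exists_lipschitz_between [Nonempty S] {d : S → S → ℝ} (hd : IsPseudometric d)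
    {f g : S → ℝ} (hfg : ∀ s t, f s - g t ≤ d s t) :
    ∃ w : S → ℝ, (∀ a b, w a - w b ≤ d a b) ∧ ∀ s, f s ≤ w s ∧ w s ≤ g s := by
  obtain ⟨hrefl, hsymm, htri⟩ := hd
  refine ⟨fun t => Finset.univ.inf' Finset.univ_nonempty fun s => d s t + g s,
    fun a b => ?_, fun t => ⟨?_, ?_⟩⟩
  · obtain ⟨s, -, hs⟩ := Finset.exists_mem_eq_inf' Finset.univ_nonempty fun s => d s b + g s
    have := Finset.inf'_le (fun s => d s a + g s) (Finset.mem_univ s)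
    linarith [htri s b a, hsymm a b]
  · exact Finset.le_inf' _ _ fun s _ => by linarith [hfg t s, hsymm s t]
  · have := Finset.inf'_le (fun s => d s t + g s) (Finset.mem_univ t)
    rwa [hrefl, zero_add] at this

theorem exists_lipschitz_of_lt_kan {d : S → S → ℝ} (hd : IsPseudometric d) (hb : Bounded1 d)
    {Δ Θ : S → ℝ} (hΔ : IsDist Δ) (hΘ : IsDist Θ) {c : ℝ} (hc : c < Kan d Δ Θ) :
    ∃ u : S → ℝ, (∀ s, u s ∈ Set.Icc 0 1) ∧ (∀ s t, u s - u t ≤ d s t) ∧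
      c < ∑ s, Δ s * u s - ∑ s, Θ s * u s := by
  have := hΔ.nonempty
  obtain ⟨f, g, hfg, hc⟩ := exists_potentials_of_lt_kan (fun s t => (hb s t).1) hΔ hΘ hc
  obtain ⟨w, hw, hfwg⟩ := exists_lipschitz_between hd hfg
  obtain ⟨t₀, -, ht₀⟩ := Finset.exists_mem_eq_inf' Finset.univ_nonempty w
  refine ⟨fun s => w s + -w t₀, fun s => ⟨?_, ?_⟩, fun s t => by linarith [hw s t], ?_⟩
  · linarith [ht₀ ▸ Finset.inf'_le w (Finset.mem_univ s)]
  · linarith [hw s t₀, (hb s t₀).2]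
  · rw [hΔ.sum_mul_add_const, hΘ.sum_mul_add_const]
    linarith [hΔ.sum_mul_le_sum_mul fun s => (hfwg s).1,
      hΘ.sum_mul_le_sum_mul fun s => (hfwg s).2]

end Kantorovich

theorem le_sup0 {s : Set ℝ} (hs : BddAbove s) {x : ℝ} (hx : x ∈ s) : x ≤ sup0 s := by
  rw [sup0, if_pos ⟨x, hx⟩]
  exact le_csSup hs hx

theorem sup0_le {s : Set ℝ} {b : ℝ} (hb : 0 ≤ b) (h : ∀ x ∈ s, x ≤ b) : sup0 s ≤ b := by
  rw [sup0]
  split_ifs with hne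
  exacts [csSup_le hne h, hb]

theorem sup0_lt {s : Set ℝ} (hs : s.Finite) {b : ℝ} (hb : 0 < b) (h : ∀ x ∈ s, x < b) :
    sup0 s < b := by
  rw [sup0]
  split_ifs with hne
  exacts [(hs.csSup_lt_iff hne).mpr h, hb]

theorem sup0_mem_Icc {s : Set ℝ} (h : ∀ x ∈ s, x ∈ Set.Icc 0 1) : sup0 s ∈ Set.Icc 0 1 := by
  rw [sup0]
  split_ifs with hne
  · obtain ⟨x, hx⟩ := hne
    exact ⟨(h x hx).1.trans (le_csSup ⟨1, fun y hy => (h y hy).2⟩ hx),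
      csSup_le ⟨x, hx⟩ fun y hy => (h y hy).2⟩
  · norm_num

section Logic

variable {S A : Type} [Fintype S] {T : PLTS S A}

theorem semS_dia (a : A) (ψ : DF A) (s : S) :
    semS T (SF.dia a ψ) s = sup0 (semD T ψ '' der T s a) := by
  simp only [semS, der, Set.image, eq_comm]
  rfl

mutual
theorem semS_mem_Icc (hwf : WellFormed T) : ∀ (φ : SF A) (s : S), semS T φ s ∈ Set.Icc 0 1
  | SF.top, s => by simp [semS]
  | SF.neg φ, s => by
    have := semS_mem_Icc hwf φ s
    simp only [semS, Set.mem_Icc] at this ⊢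
    constructor <;> linarith
  | SF.sub φ p, s => by
    have := semS_mem_Icc hwf φ s
    simp only [semS, Set.mem_Icc] at this ⊢
    exact ⟨le_max_right _ _, max_le (by linarith [p.2.1]) zero_le_one⟩
  | SF.and φ₁ φ₂, s => by
    have h₁ := semS_mem_Icc hwf φ₁ s
    have h₂ := semS_mem_Icc hwf φ₂ s
    simp only [semS]
    exact ⟨le_min h₁.1 h₂.1, (min_le_left _ _).trans h₁.2⟩
  | SF.dia a ψ, s => by
    rw [semS_dia]
    exact sup0_mem_Icc fun _ ⟨Δ, hΔ, h⟩ => h ▸ semD_mem_Icc hwf ψ Δ (hwf s a Δ hΔ)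

theorem semD_mem_Icc (hwf : WellFormed T) :
    ∀ (ψ : DF A) (Δ : S → ℝ), IsDist Δ → semD T ψ Δ ∈ Set.Icc 0 1
  | DF.sub ψ p, Δ, hΔ => by
    have := semD_mem_Icc hwf ψ Δ hΔ
    simp only [semD, Set.mem_Icc] at this ⊢
    exact ⟨le_max_right _ _, max_le (by linarith [p.2.1]) zero_le_one⟩
  | DF.and ψ₁ ψ₂, Δ, hΔ => by
    have h₁ := semD_mem_Icc hwf ψ₁ Δ hΔ
    have h₂ := semD_mem_Icc hwf ψ₂ Δ hΔ
    simp only [semD]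
    exact ⟨le_min h₁.1 h₂.1, (min_le_left _ _).trans h₁.2⟩
  | DF.box φ, Δ, hΔ => by
    simp only [semD]
    exact hΔ.sum_mul_mem_Icc (semS_mem_Icc hwf φ)
end

theorem bddAbove_semD_image (hwf : WellFormed T) (ψ : DF A) (s : S) (a : A) :
    BddAbove (semD T ψ '' der T s a) :=
  ⟨1, fun _ ⟨Δ, hΔ, h⟩ => h ▸ (semD_mem_Icc hwf ψ Δ (hwf s a Δ hΔ)).2⟩

theorem abs_semS_sub_le_dLogic (hwf : WellFormed T) (φ : SF A) (s t : S) :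
    |semS T φ s - semS T φ t| ≤ dLogic T s t := by
  refine le_csSup ⟨1, ?_⟩ ⟨φ, rfl⟩
  rintro _ ⟨φ', rfl⟩
  have hs := semS_mem_Icc hwf φ' s
  have ht := semS_mem_Icc hwf φ' t
  exact abs_sub_le_of_nonneg_of_le hs.1 hs.2 ht.1 ht.2

theorem abs_semD_sub_le_dDLogic (hwf : WellFormed T) {Δ Θ : S → ℝ} (hΔ : IsDist Δ)
    (hΘ : IsDist Θ) (ψ : DF A) : |semD T ψ Δ - semD T ψ Θ| ≤ dDLogic T Δ Θ := by
  refine le_csSup ⟨1, ?_⟩ ⟨ψ, rfl⟩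
  rintro _ ⟨ψ', rfl⟩
  have hΔ' := semD_mem_Icc hwf ψ' Δ hΔ
  have hΘ' := semD_mem_Icc hwf ψ' Θ hΘ
  exact abs_sub_le_of_nonneg_of_le hΔ'.1 hΔ'.2 hΘ'.1 hΘ'.2

theorem dLogic_le {s t : S} {b : ℝ} (h : ∀ φ : SF A, |semS T φ s - semS T φ t| ≤ b) :
    dLogic T s t ≤ b :=
  csSup_le ⟨_, SF.top, rfl⟩ fun _ ⟨φ, hr⟩ => hr ▸ h φ

theorem exists_lt_semS_sub {s t : S} {c : ℝ} (h : c < dLogic T s t) :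
    ∃ φ : SF A, c < semS T φ s - semS T φ t := by
  obtain ⟨_, ⟨φ, rfl⟩, hφ⟩ := exists_lt_of_lt_csSup
    (s := {r | ∃ φ : SF A, r = |semS T φ s - semS T φ t|}) ⟨_, SF.top, rfl⟩ h
  rcases abs_cases (semS T φ s - semS T φ t) with ⟨habs, -⟩ | ⟨habs, -⟩
  · exact ⟨φ, habs ▸ hφ⟩
  · refine ⟨SF.neg φ, ?_⟩
    simp only [semS]
    linarith

theorem bounded1_dLogic (hwf : WellFormed T) : Bounded1 (dLogic T) := fun s t =>
  ⟨(abs_nonneg _).trans (abs_semS_sub_le_dLogic hwf SF.top s t), dLogic_le fun φ =>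
    abs_sub_le_of_nonneg_of_le (semS_mem_Icc hwf φ s).1 (semS_mem_Icc hwf φ s).2
      (semS_mem_Icc hwf φ t).1 (semS_mem_Icc hwf φ t).2⟩

theorem isPseudometric_dLogic (hwf : WellFormed T) : IsPseudometric (dLogic T) := by
  have hsymm : ∀ s t, dLogic T s t ≤ dLogic T t s := fun s t =>
    dLogic_le fun φ => abs_sub_comm (semS T φ s) _ ▸ abs_semS_sub_le_dLogic hwf φ t s
  refine ⟨fun s => le_antisymm (dLogic_le fun φ => by simp) (bounded1_dLogic hwf s s).1,
    fun s t => le_antisymm (hsymm s t) (hsymm t s), fun s t r => dLogic_le fun φ => ?_⟩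
  exact (abs_sub_le _ _ _).trans
    (add_le_add (abs_semS_sub_le_dLogic hwf φ s t) (abs_semS_sub_le_dLogic hwf φ t r))

mutual
theorem abs_semS_sub_le_of_isSBM (hwf : WellFormed T) {d : S → S → ℝ} (hd : IsSBM T d) :
    ∀ (φ : SF A) (s t : S), |semS T φ s - semS T φ t| ≤ d s t
  | SF.top, s, t => by simpa [semS] using (hd.2.1 s t).1
  | SF.neg φ, s, t => by
    simpa only [semS, sub_sub_sub_cancel_left, abs_sub_comm]
      using abs_semS_sub_le_of_isSBM hwf hd φ s t
  | SF.sub φ p, s, t => (abs_max_sub_max_le_abs _ _ _).trans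
    (by simpa using abs_semS_sub_le_of_isSBM hwf hd φ s t)
  | SF.and φ₁ φ₂, s, t => (abs_min_sub_min_le_max _ _ _ _).trans
    (max_le (abs_semS_sub_le_of_isSBM hwf hd φ₁ s t) (abs_semS_sub_le_of_isSBM hwf hd φ₂ s t))
  | SF.dia a ψ, s, t => by
    -- the transfer property of `d` at level `ε = d z w` matches every move of `z`
    have key : ∀ z w, d z w < 1 → semS T (SF.dia a ψ) z ≤ semS T (SF.dia a ψ) w + d z w := by
      intro z w hzw
      have hw0 := (semS_mem_Icc hwf (SF.dia a ψ) w).1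
      rw [semS_dia] at hw0 ⊢
      rw [semS_dia]
      refine sup0_le (add_nonneg hw0 (hd.2.1 z w).1) ?_
      rintro _ ⟨Δ, hΔ, rfl⟩
      obtain ⟨Δ', hΔ', hK⟩ := hd.2.2 z w _ (hd.2.1 z w).1 hzw le_rfl a Δ hΔ
      have hψ := (abs_le.mp ((abs_semD_sub_le_kan_of_isSBM hwf hd ψ Δ Δ' (hwf z a Δ hΔ)
        (hwf w a Δ' hΔ')).trans hK)).2
      linarith [le_sup0 (bddAbove_semD_image hwf ψ w a) ⟨Δ', hΔ', rfl⟩]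
    rcases lt_or_ge (d s t) 1 with h | h
    · have hsymm := hd.1.2.1 t s
      rw [abs_sub_le_iff]
      constructor
      · linarith [key s t h]
      · linarith [key t s (hsymm ▸ h)]
    · have hs := semS_mem_Icc hwf (SF.dia a ψ) s
      have ht := semS_mem_Icc hwf (SF.dia a ψ) t
      exact (abs_sub_le_of_nonneg_of_le hs.1 hs.2 ht.1 ht.2).trans h

theorem abs_semD_sub_le_kan_of_isSBM (hwf : WellFormed T) {d : S → S → ℝ} (hd : IsSBM T d) :
    ∀ (ψ : DF A) (Δ Θ : S → ℝ), IsDist Δ → IsDist Θ → |semD T ψ Δ - semD T ψ Θ| ≤ Kan d Δ Θ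
  | DF.sub ψ p, Δ, Θ, hΔ, hΘ => (abs_max_sub_max_le_abs _ _ _).trans
    (by simpa using abs_semD_sub_le_kan_of_isSBM hwf hd ψ Δ Θ hΔ hΘ)
  | DF.and ψ₁ ψ₂, Δ, Θ, hΔ, hΘ => (abs_min_sub_min_le_max _ _ _ _).trans
    (max_le (abs_semD_sub_le_kan_of_isSBM hwf hd ψ₁ Δ Θ hΔ hΘ)
      (abs_semD_sub_le_kan_of_isSBM hwf hd ψ₂ Δ Θ hΔ hΘ))
  | DF.box φ, Δ, Θ, hΔ, hΘ => abs_sum_mul_sub_le_kan hΔ hΘ (abs_semS_sub_le_of_isSBM hwf hd φ)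
end

theorem dLogic_le_of_isSBM (hwf : WellFormed T) {d : S → S → ℝ} (hd : IsSBM T d) (s t : S) :
    dLogic T s t ≤ d s t :=
  dLogic_le fun φ => abs_semS_sub_le_of_isSBM hwf hd φ s t

theorem dDLogic_le_kan_of_isSBM (hwf : WellFormed T) {d : S → S → ℝ} (hd : IsSBM T d)
    {Δ Θ : S → ℝ} (hΔ : IsDist Δ) (hΘ : IsDist Θ) : dDLogic T Δ Θ ≤ Kan d Δ Θ :=
  csSup_le ⟨_, DF.box SF.top, rfl⟩ fun _ ⟨ψ, hr⟩ =>
    hr ▸ abs_semD_sub_le_kan_of_isSBM hwf hd ψ Δ Θ hΔ hΘ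

end Logic

section Completeness

variable {S A : Type} [Fintype S] {T : PLTS S A}

theorem exists_semS_eq_inf' {ι : Type} {I : Finset ι} (hI : I.Nonempty) (φ : ι → SF A) :
    ∃ χ : SF A, semS T χ = I.inf' hI fun i => semS T (φ i) := by
  refine Finset.inf'_induction (p := fun g => ∃ χ : SF A, semS T χ = g) hI _ ?_
    fun i _ => ⟨φ i, rfl⟩
  rintro _ ⟨χ₁, rfl⟩ _ ⟨χ₂, rfl⟩
  exact ⟨SF.and χ₁ χ₂, funext fun s => by simp [semS]⟩

theorem exists_semS_eq_sup' {ι : Type} {I : Finset ι} (hI : I.Nonempty) (φ : ι → SF A) :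
    ∃ χ : SF A, semS T χ = I.sup' hI fun i => semS T (φ i) := by
  refine Finset.sup'_induction (p := fun g => ∃ χ : SF A, semS T χ = g) hI _ ?_
    fun i _ => ⟨φ i, rfl⟩
  rintro _ ⟨χ₁, rfl⟩ _ ⟨χ₂, rfl⟩
  exact ⟨SF.neg (SF.and (SF.neg χ₁) (SF.neg χ₂)), funext fun s => by
    simp [semS, min_sub_sub_left]⟩

theorem exists_semS_eq_clamp (hwf : WellFormed T) (φ : SF A) {k : ℝ} (hk : |k| ≤ 1) :
    ∃ χ : SF A, ∀ s, semS T χ s = max (min (semS T φ s + k) 1) 0 := by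
  obtain ⟨hk₁, hk₂⟩ := abs_le.mp hk
  rcases le_total 0 k with hk0 | hk0
  · refine ⟨SF.neg (SF.sub (SF.neg φ) ⟨k, hk0, hk₂⟩), fun s => ?_⟩
    have := semS_mem_Icc hwf φ s
    simp only [semS]
    rcases le_total (semS T φ s + k) 1 with h | h
    · rw [min_eq_left h, max_eq_left (by linarith), max_eq_left (by linarith [this.1])]
      ring
    · rw [min_eq_right h, max_eq_right (by linarith), max_eq_left zero_le_one]
      ring
  · refine ⟨SF.sub φ ⟨-k, by linarith, by linarith⟩, fun s => ?_⟩
    have := semS_mem_Icc hwf φ s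
    simp only [semS, sub_neg_eq_add]
    rw [min_eq_left (by linarith [this.2])]

theorem exists_semS_pinned (hwf : WellFormed T) {u : S → ℝ} (hu : ∀ z, u z ∈ Set.Icc 0 1)
    {v w : S} (hLip : u v - u w ≤ dLogic T v w) {δ : ℝ} (hδ : 0 < δ) :
    ∃ ζ : SF A, semS T ζ v = u v ∧ semS T ζ w ≤ u w + δ := by
  obtain ⟨φ, hφ⟩ := exists_lt_semS_sub (c := u v - u w - δ) (by linarith)
  have hφv := semS_mem_Icc hwf φ v
  obtain ⟨ζ, hζ⟩ := exists_semS_eq_clamp hwf φ (k := u v - semS T φ v)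
    (abs_sub_le_of_nonneg_of_le (hu v).1 (hu v).2 hφv.1 hφv.2)
  refine ⟨ζ, ?_, ?_⟩
  · rw [hζ, add_sub_cancel, min_eq_left (hu v).2, max_eq_left (hu v).1]
  · rw [hζ]
    exact max_le (by linarith [min_le_left (semS T φ w + (u v - semS T φ v)) 1])
      (by linarith [(hu w).1])

/-- Lattice approximation: `max_v min_w ζ v w`, with `ζ v w` pinned to `u` at `v` and at most
`u + δ` at `w`. -/
theorem exists_semS_approx [Nonempty S] (hwf : WellFormed T) {u : S → ℝ}
    (hu : ∀ z, u z ∈ Set.Icc 0 1) (hLip : ∀ v w, u v - u w ≤ dLogic T v w) {δ : ℝ}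
    (hδ : 0 < δ) : ∃ φ : SF A, ∀ z, u z ≤ semS T φ z ∧ semS T φ z ≤ u z + δ := by
  choose ζ hζv hζw using fun v w => exists_semS_pinned hwf hu (hLip v w) hδ
  choose χ hχ using fun v => exists_semS_eq_inf' (T := T) Finset.univ_nonempty (ζ v)
  obtain ⟨φ, hφ⟩ := exists_semS_eq_sup' (T := T) Finset.univ_nonempty χ
  refine ⟨φ, fun z => ⟨?_, ?_⟩⟩
  · rw [hφ, Finset.sup'_apply]
    refine Finset.le_sup'_of_le _ (Finset.mem_univ z) ?_
    rw [hχ, Finset.inf'_apply]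
    exact Finset.le_inf' _ _ fun w _ => (hζv z w).ge
  · rw [hφ, Finset.sup'_apply]
    refine Finset.sup'_le _ _ fun v _ => ?_
    rw [hχ, Finset.inf'_apply]
    exact (Finset.inf'_le _ (Finset.mem_univ z)).trans (hζw v z)

/-- The condition `ε < semD T ψ Δ` covers a state without `a`-moves, where `⟨a⟩ψ` has value
`sup0 ∅ = 0`. -/
def Separates (T : PLTS S A) (ε : ℝ) (ψ : DF A) (Δ : S → ℝ) (P : Set (S → ℝ)) : Prop :=
  ε < semD T ψ Δ ∧ ∀ Θ ∈ P, semD T ψ Θ + ε < semD T ψ Δ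

theorem separates_of_lt_kan (hwf : WellFormed T) {Δ Θ : S → ℝ} (hΔ : IsDist Δ) (hΘ : IsDist Θ)
    {ε : ℝ} (h : ε < Kan (dLogic T) Δ Θ) : ∃ ψ : DF A, Separates T ε ψ Δ {Θ} := by
  obtain ⟨u, hu, hLip, hgap⟩ := exists_lipschitz_of_lt_kan (isPseudometric_dLogic hwf)
    (bounded1_dLogic hwf) hΔ hΘ h
  have := hΔ.nonempty
  set δ := (∑ s, Δ s * u s - ∑ s, Θ s * u s - ε) / 2 with hδ
  obtain ⟨φ, hφ⟩ := exists_semS_approx hwf hu hLip (δ := δ) (by rw [hδ]; linarith)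
  have hΔφ : ∑ s, Δ s * u s ≤ semD T (DF.box φ) Δ := hΔ.sum_mul_le_sum_mul fun s => (hφ s).1
  have hΘφ : semD T (DF.box φ) Θ ≤ ∑ s, Θ s * u s + δ :=
    (hΘ.sum_mul_le_sum_mul fun s => (hφ s).2).trans_eq (hΘ.sum_mul_add_const u δ)
  have hΘu := (hΘ.sum_mul_mem_Icc hu).1
  refine ⟨DF.box φ, by linarith, ?_⟩
  rintro _ rfl
  linarith

theorem Separates.lower {ε c : ℝ} {ψ : DF A} {Δ : S → ℝ} {P : Set (S → ℝ)}
    (h : Separates T ε ψ Δ P) (hc : ε < c) (hc0 : 0 ≤ c) (hcψ : c ≤ semD T ψ Δ)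
    (hψ1 : semD T ψ Δ ≤ 1) : ∃ ψ' : DF A, semD T ψ' Δ = c ∧ Separates T ε ψ' Δ P := by
  set ψ' := DF.sub ψ ⟨semD T ψ Δ - c, by linarith, by linarith⟩
  have hval : semD T ψ' Δ = c := by
    simp only [ψ', semD]
    rw [sub_sub_cancel, max_eq_left hc0]
  refine ⟨ψ', hval, hval ▸ hc, fun Θ hΘ => ?_⟩
  have := h.2 Θ hΘ
  rw [hval]
  simp only [ψ', semD]
  have : max (semD T ψ Θ - (semD T ψ Δ - c)) 0 < c - ε := max_lt (by linarith) (by linarith)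
  linarith

/-- Lower both separators to the common value `min` at `Δ`, then conjoin them. -/
theorem Separates.union (hwf : WellFormed T) {Δ : S → ℝ} (hΔ : IsDist Δ) {ε : ℝ}
    (hε : 0 ≤ ε) {ψ₁ ψ₂ : DF A} {P Q : Set (S → ℝ)} (h₁ : Separates T ε ψ₁ Δ P)
    (h₂ : Separates T ε ψ₂ Δ Q) : ∃ ψ : DF A, Separates T ε ψ Δ (P ∪ Q) := by
  set c := min (semD T ψ₁ Δ) (semD T ψ₂ Δ)
  have hc : ε < c := lt_min h₁.1 h₂.1
  obtain ⟨ψ₁', hv₁, h₁'⟩ :=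
    h₁.lower hc (hε.trans hc.le) (min_le_left _ _) (semD_mem_Icc hwf ψ₁ Δ hΔ).2
  obtain ⟨ψ₂', hv₂, h₂'⟩ :=
    h₂.lower hc (hε.trans hc.le) (min_le_right _ _) (semD_mem_Icc hwf ψ₂ Δ hΔ).2
  have hv : semD T (DF.and ψ₁' ψ₂') Δ = c := by simp only [semD, hv₁, hv₂, min_self]
  refine ⟨DF.and ψ₁' ψ₂', hv ▸ hc, ?_⟩
  rintro Θ (hΘ | hΘ) <;> rw [hv] <;> simp only [semD]
  · linarith [min_le_left (semD T ψ₁' Θ) (semD T ψ₂' Θ), hv₁ ▸ h₁'.2 Θ hΘ]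
  · linarith [min_le_right (semD T ψ₁' Θ) (semD T ψ₂' Θ), hv₂ ▸ h₂'.2 Θ hΘ]

theorem exists_separates_of_finite (hwf : WellFormed T) {Δ : S → ℝ} (hΔ : IsDist Δ) {ε : ℝ}
    (hε0 : 0 ≤ ε) (hε1 : ε < 1) {P : Set (S → ℝ)} (hP : P.Finite)
    (h : ∀ Θ ∈ P, ∃ ψ : DF A, Separates T ε ψ Δ {Θ}) : ∃ ψ : DF A, Separates T ε ψ Δ P := by
  induction P, hP using Set.Finite.induction_on with
  | empty => exact ⟨DF.box SF.top, by simpa [semD, semS, hΔ.2] using hε1, by simp⟩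
  | @insert Θ P _ _ ih =>
    obtain ⟨ψ₁, h₁⟩ := h Θ (Set.mem_insert _ _)
    obtain ⟨ψ₂, h₂⟩ := ih fun Θ' hΘ' => h Θ' (Set.mem_insert_of_mem _ hΘ')
    exact Set.insert_eq Θ P ▸ h₁.union hwf hΔ hε0 h₂

theorem dLogic_transfer (hwf : WellFormed T) (hfin : ImageFinite T) :
    ∀ s t (ε : ℝ), 0 ≤ ε → ε < 1 → dLogic T s t ≤ ε →
      ∀ a Δ, T.trans s a Δ → ∃ Δ', T.trans t a Δ' ∧ Kan (dLogic T) Δ Δ' ≤ ε := by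
  intro s t ε hε0 hε1 hst a Δ hΔ
  by_contra! hK
  have hΔd := hwf s a Δ hΔ
  obtain ⟨ψ, hψΔ, hψ⟩ := exists_separates_of_finite hwf hΔd hε0 hε1 (hfin t a)
    fun Θ hΘ => separates_of_lt_kan hwf hΔd (hwf t a Θ hΘ) (hK Θ hΘ)
  have hs : semD T ψ Δ ≤ semS T (SF.dia a ψ) s :=
    semS_dia a ψ s ▸ le_sup0 (bddAbove_semD_image hwf ψ s a) ⟨Δ, hΔ, rfl⟩
  have ht : semS T (SF.dia a ψ) t < semD T ψ Δ - ε := by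
    rw [semS_dia]
    refine sup0_lt ((hfin t a).image _) (by linarith) ?_
    rintro _ ⟨Θ, hΘ, rfl⟩
    linarith [hψ Θ hΘ]
  linarith [(le_abs_self _).trans (abs_semS_sub_le_dLogic hwf (SF.dia a ψ) s t)]

theorem kan_dLogic_le_dDLogic (hwf : WellFormed T) {Δ Θ : S → ℝ} (hΔ : IsDist Δ)
    (hΘ : IsDist Θ) : Kan (dLogic T) Δ Θ ≤ dDLogic T Δ Θ := by
  by_contra! h
  obtain ⟨ψ, -, hψ⟩ := separates_of_lt_kan hwf hΔ hΘ h
  linarith [hψ Θ rfl, (le_abs_self _).trans (abs_semD_sub_le_dDLogic hwf hΔ hΘ ψ)]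

end Completeness

/-- Completeness of the metric HML: the logical state metric is itself a
state-based bisimulation metric; hence it coincides with the state-based
bisimilarity metric, and the Kantorovich lifting of the bisimilarity metric
coincides with the logical distribution metric. -/
theorem hml_completeness {S A : Type} [Fintype S] (T : PLTS S A)
    (hwf : WellFormed T) (hfin : ImageFinite T) :
    IsSBM T (dLogic T) ∧
    ∀ db : S → S → ℝ,
      (IsSBM T db ∧ ∀ d, IsSBM T d → ∀ s t, db s t ≤ d s t) →
      ((∀ s t, db s t ≤ dLogic T s t) ∧
       (∀ s t, db s t = dLogic T s t) ∧
       ∀ Δ Θ : S → ℝ, IsDist Δ → IsDist Θ → Kan db Δ Θ = dDLogic T Δ Θ) := by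
  have hL : IsSBM T (dLogic T) :=
    ⟨isPseudometric_dLogic hwf, bounded1_dLogic hwf, dLogic_transfer hwf hfin⟩
  refine ⟨hL, fun db ⟨hdb, hleast⟩ => ?_⟩
  have heq : db = dLogic T :=
    funext₂ fun s t => le_antisymm (hleast _ hL s t) (dLogic_le_of_isSBM hwf hdb s t)
  subst heq
  exact ⟨fun _ _ => le_rfl, fun _ _ => rfl, fun Δ Θ hΔ hΘ =>
    le_antisymm (kan_dLogic_le_dDLogic hwf hΔ hΘ) (dDLogic_le_kan_of_isSBM hwf hdb hΔ hΘ)⟩
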